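/- The inclusion compression rule is sound: if M ⊨_X 𝗒 ⊆ 𝗑 and M ⊨_X α(𝗑/𝗓), where α(𝗑/𝗓) is a first-order formula all of whose free variables are among 𝗑, then M ⊨_X α(𝗒/𝗓). -/

import Mathlib

namespace TeamSem

variable {M : Type}

/-- A team is a set of assignments (variables are natural numbers). -/
abbrev Team (M : Type) := Set (ℕ → M)

/-- Lax existential extension of a team `X` along variable `x` by a choice function `F`. -/
def extT (X : Team M) (x : ℕ) (F : (ℕ → M) → Set M) : Team M :=
  {t | ∃ s ∈ X, ∃ a ∈ F s, t = Function.update s x a}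

/-- Universal extension of a team `X` along variable `x`. -/
def extAll (X : Team M) (x : ℕ) : Team M :=
  {t | ∃ s ∈ X, ∃ a : M, t = Function.update s x a}

/-- Team semantics of the inclusion atom for finite sequences of variables. -/
def inclSatF {n : ℕ} (X : Team M) (xs ys : Fin n → ℕ) : Prop :=
  ∀ s ∈ X, ∃ s' ∈ X, ∀ j, s (xs j) = s' (ys j)

/-- A first-order formula `α(𝗑/𝗓)` whose free variables are among `𝗑` is rendered
semantically as a predicate `p` on the tuple of values of `𝗑`; `α(𝗒/𝗓)` is then `p`
applied to the values of `𝗒`. -/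
theorem incl_compression {n : ℕ} (X : Team M) (x y : Fin n → ℕ)
    (p : (Fin n → M) → Prop)
    (hincl : inclSatF X y x)
    (hα : ∀ s ∈ X, p (fun i => s (x i))) :
    ∀ s ∈ X, p (fun i => s (y i)) := by
  intro s hs
  obtain ⟨s', hs', hvalues⟩ := hincl s hs
  have hsame : (fun i => s (y i)) = fun i => s' (x i) := funext hvalues
  exact hsame ▸ hα s' hs'

end TeamSem
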